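/- LP_CS is sound and complete with respect to the class of binary LP_CS algebras: ⊢_{LP_CS} φ iff θ̃(φ)=1 in every binary LP_CS algebra. -/
import Mathlib


/-- Proof terms of the logic of proofs LP. -/
inductive Tm : Type where
  | var : ℕ → Tm
  | const : ℕ → Tm
  | app : Tm → Tm → Tm
  | sum : Tm → Tm → Tm
  | bang : Tm → Tm

/-- Formulas of LP. -/
inductive Fm : Type where
  | prop : ℕ → Fm
  | bot : Fm
  | neg : Fm → Fm
  | or : Fm → Fm → Fm
  | box : Tm → Fm → Fm

def Fm.imp (φ ψ : Fm) : Fm := .or (.neg φ) ψ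
def Fm.and (φ ψ : Fm) : Fm := .neg (.or (.neg φ) (.neg ψ))
def Fm.iff (φ ψ : Fm) : Fm := (φ.imp ψ).and (ψ.imp φ)
def Fm.top : Fm := .neg .bot

/-- Axioms of LP: the propositional axioms PL1–PL5 plus Appl, Sum, jT, j4. -/
inductive LPAxiom : Fm → Prop where
  | pl1 (φ ψ : Fm) : LPAxiom (φ.imp (.or φ ψ))
  | pl2 (φ ψ : Fm) : LPAxiom ((Fm.or φ ψ).imp (.or ψ φ))
  | pl3 (φ : Fm) : LPAxiom ((Fm.or φ φ).imp φ)
  | pl4 (φ ψ χ : Fm) : LPAxiom ((φ.imp ψ).imp ((Fm.or χ φ).imp (.or χ ψ)))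
  | pl5 (φ : Fm) : LPAxiom (Fm.bot.imp φ)
  | appl (s t : Tm) (φ ψ : Fm) :
      LPAxiom ((Fm.box s (φ.imp ψ)).imp ((Fm.box t φ).imp (.box (.app s t) ψ)))
  | sum (s t : Tm) (φ : Fm) : LPAxiom (((Fm.box s φ).or (.box t φ)).imp (.box (.sum s t) φ))
  | jT (t : Tm) (φ : Fm) : LPAxiom ((Fm.box t φ).imp φ)
  | j4 (t : Tm) (φ : Fm) : LPAxiom ((Fm.box t φ).imp (.box (.bang t) (.box t φ)))

/-- A constant specification: a set of pairs (c, φ) representing formulas c:φ. -/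
abbrev ConstSpec := Set (ℕ × Fm)

/-- CS is a genuine constant specification: it only justifies axiom instances. -/
def ConstSpec.IsCS (CS : ConstSpec) : Prop := ∀ p ∈ CS, LPAxiom p.2

/-- CS is axiomatically appropriate: every axiom instance is justified by some constant. -/
def ConstSpec.AxApp (CS : ConstSpec) : Prop := ∀ φ, LPAxiom φ → ∃ c, (c, φ) ∈ CS

/-- Derivability in LP_CS from a set Γ of hypotheses; the only rule is modus ponens. -/
inductive Deriv (CS : ConstSpec) (Γ : Set Fm) : Fm → Prop where
  | ax {φ} : LPAxiom φ → Deriv CS Γ φ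
  | cs {c φ} : (c, φ) ∈ CS → Deriv CS Γ (.box (.const c) φ)
  | hyp {φ} : φ ∈ Γ → Deriv CS Γ φ
  | mp {φ ψ} : Deriv CS Γ (φ.imp ψ) → Deriv CS Γ φ → Deriv CS Γ ψ

/-- Extension of a valuation θ to all formulas, given functions □_t : Fm → A
(θ̃(t:φ) = □_t(φ)). -/
def evalFm {A : Type*} [BooleanAlgebra A] (box : Tm → Fm → A) (θ : ℕ → A) : Fm → A
  | .prop p => θ p
  | .bot => ⊥
  | .neg φ => (evalFm box θ φ)ᶜ
  | .or φ ψ => evalFm box θ φ ⊔ evalFm box θ ψ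
  | .box t φ => box t φ

/-- The conditions for functions □_t : Fm → A on a Boolean algebra A to form a
full LP_CS algebra: Al-Appl, Al-Sum, Al-j4, Al-CS and Al-jT. -/
structure IsFullLP (CS : ConstSpec) {A : Type*} [BooleanAlgebra A]
    (box : Tm → Fm → A) : Prop where
  appl : ∀ (s t : Tm) (φ ψ : Fm), box s (φ.imp ψ) ⊓ box t φ ≤ box (.app s t) ψ
  sum : ∀ (s t : Tm) (φ : Fm), box s φ ⊔ box t φ ≤ box (.sum s t) φ
  j4 : ∀ (t : Tm) (φ : Fm), box t φ ≤ box (.bang t) (.box t φ)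
  cs : ∀ (c : ℕ) (φ : Fm), (c, φ) ∈ CS → box (.const c) φ = ⊤
  jT : ∀ (θ : ℕ → A) (t : Tm) (φ : Fm), box t φ ≤ evalFm box θ φ

/-- A Mkrtychev model of LP_CS over the two truth values: an evidence function
E : Tm × Fm → {0,1} and a valuation V, satisfying Appl, Sum, jT, j4 and CS. -/
structure MkModel (CS : ConstSpec) where
  E : Tm → Fm → Bool
  V : ℕ → Bool
  appl : ∀ (s t : Tm) (φ ψ : Fm), E s (φ.imp ψ) ⊓ E t φ ≤ E (.app s t) ψ
  sum : ∀ (s t : Tm) (φ : Fm), E s φ ⊔ E t φ ≤ E (.sum s t) φ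
  jT : ∀ (t : Tm) (φ : Fm), E t φ ≤ evalFm E V φ
  j4 : ∀ (t : Tm) (φ : Fm), E t φ ≤ E (.bang t) (.box t φ)
  cs : ∀ (c : ℕ) (φ : Fm), (c, φ) ∈ CS → E (.const c) φ = true

/-- A binary LP_CS algebra: the two-element Boolean algebra of truth values with
functions □_t : Fm → {0,1} and a valuation θ satisfying Al-Appl, Al-Sum, Al-j4,
Al-CS and Al-jT. -/
structure BinAlg (CS : ConstSpec) where
  box : Tm → Fm → Bool
  val : ℕ → Bool
  appl : ∀ (s t : Tm) (φ ψ : Fm), box s (φ.imp ψ) ⊓ box t φ ≤ box (.app s t) ψ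
  sum : ∀ (s t : Tm) (φ : Fm), box s φ ⊔ box t φ ≤ box (.sum s t) φ
  j4 : ∀ (t : Tm) (φ : Fm), box t φ ≤ box (.bang t) (.box t φ)
  cs : ∀ (c : ℕ) (φ : Fm), (c, φ) ∈ CS → box (.const c) φ = true
  jT : ∀ (t : Tm) (φ : Fm), box t φ ≤ evalFm box val φ

namespace LPAux

variable {CS : ConstSpec} {Γ Δ : Set Fm} {φ ψ χ δ : Fm}

lemma perm (h : Deriv CS Γ (.or φ ψ)) : Deriv CS Γ (.or ψ φ) :=
  (Deriv.ax (LPAxiom.pl2 φ ψ)).mp h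

lemma taut (h : Deriv CS Γ (.or φ φ)) : Deriv CS Γ φ :=
  (Deriv.ax (LPAxiom.pl3 φ)).mp h

lemma add₁ (ψ : Fm) (h : Deriv CS Γ φ) : Deriv CS Γ (.or φ ψ) :=
  (Deriv.ax (LPAxiom.pl1 φ ψ)).mp h

lemma add₂ (φ : Fm) (h : Deriv CS Γ ψ) : Deriv CS Γ (.or φ ψ) := perm (add₁ φ h)

lemma sumR (himp : Deriv CS Γ (ψ.imp χ)) (h : Deriv CS Γ (.or φ ψ)) :
    Deriv CS Γ (.or φ χ) :=
  ((Deriv.ax (LPAxiom.pl4 ψ χ φ)).mp himp).mp h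

lemma syl (h1 : Deriv CS Γ (φ.imp ψ)) (h2 : Deriv CS Γ (ψ.imp χ)) :
    Deriv CS Γ (φ.imp χ) := sumR h2 h1

lemma monoL (himp : Deriv CS Γ (φ.imp ψ)) (h : Deriv CS Γ (.or φ χ)) :
    Deriv CS Γ (.or ψ χ) := perm (sumR himp (perm h))

lemma ident : Deriv CS Γ (φ.imp φ) :=
  sumR (Deriv.ax (LPAxiom.pl3 φ)) (Deriv.ax (LPAxiom.pl1 φ φ))

lemma impIntro (φ : Fm) (h : Deriv CS Γ ψ) : Deriv CS Γ (φ.imp ψ) :=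
  perm (add₁ (Fm.neg φ) h)

lemma monoLthm (h : Deriv CS Γ (φ.imp ψ)) (χ : Fm) :
    Deriv CS Γ ((Fm.or φ χ).imp (.or ψ χ)) :=
  syl (Deriv.ax (LPAxiom.pl2 φ χ))
    (syl ((Deriv.ax (LPAxiom.pl4 φ ψ χ)).mp h) (Deriv.ax (LPAxiom.pl2 χ ψ)))

lemma casesOr (h1 : Deriv CS Γ (φ.imp δ)) (h2 : Deriv CS Γ (ψ.imp δ))
    (h : Deriv CS Γ (.or φ ψ)) : Deriv CS Γ δ :=
  taut (sumR h1 (perm (sumR h2 h)))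

lemma orAssoc (h : Deriv CS Γ (.or φ (.or ψ χ))) :
    Deriv CS Γ (.or (.or φ ψ) χ) :=
  casesOr (syl (Deriv.ax (LPAxiom.pl1 φ ψ)) (Deriv.ax (LPAxiom.pl1 (.or φ ψ) χ)))
    (monoLthm (syl (Deriv.ax (LPAxiom.pl1 ψ φ)) (Deriv.ax (LPAxiom.pl2 ψ φ))) χ) h

lemma dni : Deriv CS Γ (φ.imp (.neg (.neg φ))) :=
  perm (ident (φ := .neg φ))

lemma dneRule (h : Deriv CS Γ (.neg (.neg φ))) : Deriv CS Γ φ :=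
  taut (sumR (add₁ φ h) (perm (ident (φ := φ))))

lemma explode (h1 : Deriv CS Γ φ) (h2 : Deriv CS Γ (.neg φ)) :
    Deriv CS Γ Fm.bot :=
  taut (sumR (add₁ Fm.bot (dni.mp h1)) (add₂ Fm.bot h2))

lemma mp2 (h1 : Deriv CS Γ (φ.imp (χ.imp ψ))) (h2 : Deriv CS Γ (φ.imp χ)) :
    Deriv CS Γ (φ.imp ψ) := by
  have a1 : Deriv CS Γ (.or (.neg φ) (.or ψ (.neg χ))) :=
    sumR (Deriv.ax (LPAxiom.pl2 (.neg χ) ψ)) h1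
  have a2 : Deriv CS Γ (.or (.or (.neg φ) ψ) (.neg χ)) := orAssoc a1
  have b1 : Deriv CS Γ (.or (.neg (.neg χ)) (.neg φ)) := perm (sumR dni h2)
  have c : Deriv CS Γ (.or (.or (.neg φ) ψ) (.neg φ)) := sumR b1 a2
  have d : Deriv CS Γ (.or (.or (.neg φ) (.neg φ)) ψ) := orAssoc (perm c)
  exact monoL (Deriv.ax (LPAxiom.pl3 (.neg φ))) d

theorem deduction (h : Deriv CS (insert φ Γ) ψ) : Deriv CS Γ (φ.imp ψ) := by
  induction h with
  | ax ha => exact impIntro φ (.ax ha)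
  | cs hc => exact impIntro φ (.cs hc)
  | hyp hm =>
    rcases Set.mem_insert_iff.mp hm with rfl | hm
    · exact ident
    · exact impIntro φ (.hyp hm)
  | mp _ _ ih1 ih2 => exact mp2 ih1 ih2

lemma derivMono (hsub : Γ ⊆ Δ) (h : Deriv CS Γ φ) : Deriv CS Δ φ := by
  induction h with
  | ax ha => exact .ax ha
  | cs hc => exact .cs hc
  | hyp hm => exact .hyp (hsub hm)
  | mp _ _ ih1 ih2 => exact ih1.mp ih2

lemma derivFinite (h : Deriv CS Γ φ) :
    ∃ s : Finset Fm, ↑s ⊆ Γ ∧ Deriv CS ↑s φ := by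
  induction h with
  | ax ha => exact ⟨∅, by simp, .ax ha⟩
  | cs hc => exact ⟨∅, by simp, .cs hc⟩
  | hyp hm => exact ⟨{_}, by simpa, .hyp (by simp)⟩
  | mp _ _ ih1 ih2 =>
    classical
    obtain ⟨s1, hs1, d1⟩ := ih1
    obtain ⟨s2, hs2, d2⟩ := ih2
    refine ⟨s1 ∪ s2, ?_, ?_⟩
    · intro x hx; simp only [Finset.coe_union, Set.mem_union] at hx
      exact hx.elim (fun h => hs1 h) (fun h => hs2 h)
    · exact (derivMono (by intro x hx; simp only [Finset.coe_union]; exact Set.mem_union_left _ hx) d1).mp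
        (derivMono (by intro x hx; simp only [Finset.coe_union]; exact Set.mem_union_right _ hx) d2)

end LPAux

namespace LPAux

variable {CS : ConstSpec} {Γ Δ M : Set Fm} {φ ψ χ : Fm}

/-- Consistency. -/
def Con (CS : ConstSpec) (Γ : Set Fm) : Prop := ¬ Deriv CS Γ Fm.bot

lemma finset_subset_chain_union {c : Set (Set Fm)} (hne : c.Nonempty)
    (hc : IsChain (· ⊆ ·) c) (s : Finset Fm) (hs : ↑s ⊆ ⋃₀ c) :
    ∃ t ∈ c, ↑s ⊆ t := by
  classical
  induction s using Finset.induction with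
  | empty => exact ⟨hne.choose, hne.choose_spec, by simp⟩
  | @insert a s ha ih =>
    have hsub : ↑s ⊆ ⋃₀ c := by
      refine fun x hx => hs ?_
      simp only [Finset.coe_insert, Set.mem_insert_iff]; exact Or.inr hx
    obtain ⟨t1, ht1, hst1⟩ := ih hsub
    have hain : a ∈ ⋃₀ c := hs (by simp)
    obtain ⟨t2, ht2, hat2⟩ := hain
    rcases hc.total ht1 ht2 with h | h
    · refine ⟨t2, ht2, ?_⟩
      intro x hx
      simp only [Finset.coe_insert, Set.mem_insert_iff] at hx
      rcases hx with rfl | hx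
      · exact hat2
      · exact h (hst1 hx)
    · refine ⟨t1, ht1, ?_⟩
      intro x hx
      simp only [Finset.coe_insert, Set.mem_insert_iff] at hx
      rcases hx with rfl | hx
      · exact h hat2
      · exact hst1 hx

lemma exists_mcs (hcon : Con CS Γ) :
    ∃ M, Γ ⊆ M ∧ Con CS M ∧ ∀ Δ, Con CS Δ → M ⊆ Δ → Δ ⊆ M := by
  obtain ⟨M, hM⟩ := zorn_subset_nonempty {Δ | Con CS Δ}
    (fun c hcS hchain hne => by
      refine ⟨⋃₀ c, ?_, fun s hs => Set.subset_sUnion_of_mem hs⟩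
      intro hbot
      obtain ⟨s, hs, hds⟩ := derivFinite hbot
      obtain ⟨t, htc, hst⟩ := finset_subset_chain_union hne hchain s hs
      exact hcS htc (derivMono hst hds)) Γ hcon
  exact ⟨M, hM.1, hM.2.prop, fun Δ hΔ hsub => hM.2.2 hΔ hsub⟩

section MCS

variable (hM : Con CS M) (hmax : ∀ Δ, Con CS Δ → M ⊆ Δ → Δ ⊆ M)

include hM hmax

lemma mcs_mem_of_deriv (h : Deriv CS M ψ) : ψ ∈ M := by
  have hcon : Con CS (insert ψ M) := fun hbot => hM ((deduction hbot).mp h)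
  exact hmax _ hcon (Set.subset_insert _ _) (Set.mem_insert _ _)

lemma mcs_neg_iff : (Fm.neg ψ) ∈ M ↔ ψ ∉ M := by
  constructor
  · intro hn hp
    exact hM (explode (.hyp hp) (.hyp hn))
  · intro hp
    have hincon : ¬ Con CS (insert ψ M) := fun hcon =>
      hp (hmax _ hcon (Set.subset_insert _ _) (Set.mem_insert _ _))
    have hd : Deriv CS M (ψ.imp Fm.bot) := deduction (not_not.mp hincon)
    exact mcs_mem_of_deriv hM hmax
      (taut (sumR (Deriv.ax (LPAxiom.pl5 (Fm.neg ψ))) hd))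

lemma mcs_or_iff : (Fm.or ψ χ) ∈ M ↔ ψ ∈ M ∨ χ ∈ M := by
  constructor
  · intro h
    by_contra hcon
    push_neg at hcon
    have hnψ : Fm.neg ψ ∈ M := (mcs_neg_iff hM hmax).mpr hcon.1
    have hnχ : Fm.neg χ ∈ M := (mcs_neg_iff hM hmax).mpr hcon.2
    have d1 : Deriv CS M (.or ψ Fm.bot) :=
      sumR (add₁ Fm.bot (Deriv.hyp hnχ)) (Deriv.hyp h)
    have d2 : Deriv CS M (.or Fm.bot Fm.bot) :=
      sumR (add₁ Fm.bot (Deriv.hyp hnψ)) (perm d1)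
    exact hM (taut d2)
  · rintro (h | h)
    · exact mcs_mem_of_deriv hM hmax (add₁ χ (Deriv.hyp h))
    · exact mcs_mem_of_deriv hM hmax (add₂ ψ (Deriv.hyp h))

omit hmax in
lemma mcs_bot_not_mem : Fm.bot ∉ M := fun h => hM (.hyp h)

end MCS

end LPAux

namespace LPAux

variable {CS : ConstSpec} {Γ M : Set Fm} {φ ψ : Fm}

-- Bool helpers
lemma bool_imp_le {a b : Bool} (h : a = true → b = true) : a ≤ b := by
  cases a <;> cases b <;> simp_all
lemma bool_imp2_le {a b c : Bool} (h : a = true → b = true → c = true) :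
    a ⊓ b ≤ c := by cases a <;> cases b <;> cases c <;> simp_all
lemma bool_sup_imp_le {a b c : Bool} (h1 : a = true → c = true)
    (h2 : b = true → c = true) : a ⊔ b ≤ c := by
  cases a <;> cases b <;> cases c <;> simp_all

noncomputable def mBox (M : Set Fm) (t : Tm) (φ : Fm) : Bool :=
  @decide (Fm.box t φ ∈ M) (Classical.propDecidable _)

noncomputable def mVal (M : Set Fm) (p : ℕ) : Bool :=
  @decide (Fm.prop p ∈ M) (Classical.propDecidable _)

lemma mBox_iff {t φ} : mBox M t φ = true ↔ Fm.box t φ ∈ M := by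
  simp [mBox]

lemma truth_lemma (hM : Con CS M) (hmax : ∀ Δ, Con CS Δ → M ⊆ Δ → Δ ⊆ M) :
    ∀ ψ : Fm, evalFm (mBox M) (mVal M) ψ = true ↔ ψ ∈ M := by
  intro ψ
  induction ψ with
  | prop p => simp [evalFm, mVal]
  | bot =>
    simp only [evalFm]
    constructor
    · intro h; exact absurd h (by simp)
    · intro h; exact absurd h (mcs_bot_not_mem hM)
  | neg φ ih =>
    simp only [evalFm]
    rw [mcs_neg_iff hM hmax]
    constructor
    · intro h hm
      rw [ih.mpr hm] at h
      exact absurd h (by simp)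
    · intro h
      have : evalFm (mBox M) (mVal M) φ = false := by
        cases hh : evalFm (mBox M) (mVal M) φ
        · rfl
        · exact absurd (ih.mp hh) h
      rw [this]; rfl
  | or φ χ ih1 ih2 =>
    simp only [evalFm]
    rw [mcs_or_iff hM hmax, ← ih1, ← ih2]
    cases evalFm (mBox M) (mVal M) φ <;> cases evalFm (mBox M) (mVal M) χ <;> simp
  | box t φ ih => simp only [evalFm]; exact mBox_iff

noncomputable def mcsAlg (hM : Con CS M)
    (hmax : ∀ Δ, Con CS Δ → M ⊆ Δ → Δ ⊆ M) : BinAlg CS where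
  box := mBox M
  val := mVal M
  appl s t φ ψ := bool_imp2_le fun h1 h2 =>
    mBox_iff.mpr (mcs_mem_of_deriv hM hmax
      (((Deriv.ax (LPAxiom.appl s t φ ψ)).mp (.hyp (mBox_iff.mp h1))).mp
        (.hyp (mBox_iff.mp h2))))
  sum s t φ := bool_sup_imp_le
    (fun h => mBox_iff.mpr (mcs_mem_of_deriv hM hmax
      ((Deriv.ax (LPAxiom.sum s t φ)).mp (add₁ _ (.hyp (mBox_iff.mp h))))))
    (fun h => mBox_iff.mpr (mcs_mem_of_deriv hM hmax
      ((Deriv.ax (LPAxiom.sum s t φ)).mp (add₂ _ (.hyp (mBox_iff.mp h))))))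
  j4 t φ := bool_imp_le fun h =>
    mBox_iff.mpr (mcs_mem_of_deriv hM hmax
      ((Deriv.ax (LPAxiom.j4 t φ)).mp (.hyp (mBox_iff.mp h))))
  cs c φ hc := mBox_iff.mpr (mcs_mem_of_deriv hM hmax (.cs hc))
  jT t φ := bool_imp_le fun h =>
    (truth_lemma hM hmax φ).mpr (mcs_mem_of_deriv hM hmax
      ((Deriv.ax (LPAxiom.jT t φ)).mp (.hyp (mBox_iff.mp h))))

end LPAux

namespace LPAux

variable {CS : ConstSpec} {φ : Fm}

lemma soundness_ax {ψ : Fm} (ha : LPAxiom ψ) (B : BinAlg CS) :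
    evalFm B.box B.val ψ = true := by
  cases ha with
  | pl1 φ ψ =>
    simp only [Fm.imp, evalFm]
    cases evalFm B.box B.val φ <;> cases evalFm B.box B.val ψ <;> rfl
  | pl2 φ ψ =>
    simp only [Fm.imp, evalFm]
    cases evalFm B.box B.val φ <;> cases evalFm B.box B.val ψ <;> rfl
  | pl3 φ =>
    simp only [Fm.imp, evalFm]
    cases evalFm B.box B.val φ <;> rfl
  | pl4 φ ψ χ =>
    simp only [Fm.imp, evalFm]
    cases evalFm B.box B.val φ <;> cases evalFm B.box B.val ψ <;>
      cases evalFm B.box B.val χ <;> rfl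
  | pl5 φ =>
    simp only [Fm.imp, evalFm]
    cases evalFm B.box B.val φ <;> rfl
  | appl s t φ ψ =>
    have h := B.appl s t φ ψ
    simp only [Fm.imp, evalFm] at *
    revert h
    cases B.box s (Fm.or (Fm.neg φ) ψ) <;> cases B.box t φ <;>
      cases B.box (Tm.app s t) ψ <;> decide
  | sum s t φ =>
    have h := B.sum s t φ
    simp only [Fm.imp, evalFm] at *
    revert h
    cases B.box s φ <;> cases B.box t φ <;> cases B.box (Tm.sum s t) φ <;> decide
  | jT t φ =>
    have h := B.jT t φ
    simp only [Fm.imp, evalFm] at *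
    revert h
    cases B.box t φ <;> cases evalFm B.box B.val φ <;> decide
  | j4 t φ =>
    have h := B.j4 t φ
    simp only [Fm.imp, evalFm] at *
    revert h
    cases B.box t φ <;> cases B.box (Tm.bang t) (Fm.box t φ) <;> decide

lemma soundness (h : Deriv CS ∅ φ) (B : BinAlg CS) :
    evalFm B.box B.val φ = true := by
  induction h with
  | ax ha => exact soundness_ax ha B
  | cs hc => exact B.cs _ _ hc
  | hyp hm => exact absurd hm (Set.notMem_empty _)
  | mp _ _ ih1 ih2 =>
    simp only [Fm.imp, evalFm] at ih1
    revert ih1 ih2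
    cases evalFm B.box B.val _ <;> cases evalFm B.box B.val _ <;> simp_all

theorem main (CS : ConstSpec) :
    ∀ φ : Fm, Deriv CS ∅ φ ↔ ∀ B : BinAlg CS, evalFm B.box B.val φ = true := by
  intro φ
  constructor
  · exact fun h B => soundness h B
  · intro hall
    by_contra hnd
    have hcon : Con CS (insert (Fm.neg φ) ∅) := by
      intro hbot
      have h1 : Deriv CS ∅ ((Fm.neg φ).imp Fm.bot) := deduction hbot
      have h2 : Deriv CS ∅ (Fm.neg (Fm.neg φ)) :=
        taut (sumR (Deriv.ax (LPAxiom.pl5 (Fm.neg (Fm.neg φ)))) h1)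
      exact hnd (dneRule h2)
    obtain ⟨M, hsub, hM, hmax⟩ := exists_mcs hcon
    have hnegmem : Fm.neg φ ∈ M := hsub (Set.mem_insert _ _)
    have heval := hall (mcsAlg hM hmax)
    have : evalFm (mBox M) (mVal M) φ = true := heval
    have hmem : φ ∈ M := (truth_lemma hM hmax φ).mp this
    exact ((mcs_neg_iff hM hmax).mp hnegmem) hmem

end LPAux

/-- **Soundness and completeness of LP_CS with respect to binary LP_CS algebras**:
⊢_{LP_CS} φ iff θ̃(φ) = 1 in every binary LP_CS algebra. -/
theorem LP_CS_binary_soundness_completeness (CS : ConstSpec) (hCS : CS.IsCS) :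
    ∀ φ : Fm, Deriv CS ∅ φ ↔ ∀ B : BinAlg CS, evalFm B.box B.val φ = true :=
  LPAux.main CS
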